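/- Let ε > 0, Δt ∈ (0,1], and let ρ, j : ℝ × ℝ → ℝ be solutions of the modified macroscopic system ∂t ρ + (ε²/(ε²+Δt)) ∂x j = (Δt/(ε²+Δt)) ∂xx ρ and ∂t j + (1/(ε²+Δt)) ∂x ρ = −(1/(ε²+Δt)) j + (Δt/(ε²+Δt)) ∂xx j, such that ρ and j are twice continuously differentiable in time with |∂tt ρ| ≤ M, |∂tt j| ≤ M, and ∂xx ρ and ∂xx j are continuously differentiable in time with |∂t ∂xx ρ| ≤ M, |∂t ∂xx j| ≤ M everywhere, for some constant M. Then for every (x, t), the residuals of the implicit-in-diffusion scheme satisfy |(ρ(x,t+Δt) − ρ(x,t))/Δt + (ε²/(ε²+Δt)) ∂x j(x,t) − (Δt/(ε²+Δt)) ∂xx ρ(x,t+Δt)| ≤ (3/2) M Δt and |(j(x,t+Δt) − j(x,t))/Δt + (1/(ε²+Δt)) ∂x ρ(x,t) + (1/(ε²+Δt)) j(x,t) − (Δt/(ε²+Δt)) ∂xx j(x,t+Δt)| ≤ (3/2) M Δt; that is, exact solutions of the modified system satisfy the time-discrete scheme up to first order in Δt. -/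

import Mathlib

/-!
Along each line `x = const`, the modified system says `∂ₜρ(t) = -C + b ∂ₓₓρ(t)` with
`b = Δt / (ε² + Δt) ∈ [0, 1]`. Substituting this into the scheme, its residual splits into the
first-order Taylor remainder of `ρ` divided by `Δt`, at most `M Δt / 2`, plus
`b (∂ₓₓρ(t) - ∂ₓₓρ(t + Δt))`, at most `M Δt` by the mean value theorem; likewise for `j`.
-/

/-- Partial derivative in time of a function `f : ℝ → ℝ → ℝ` (space, then time). -/
noncomputable def pt (f : ℝ → ℝ → ℝ) (x t : ℝ) : ℝ := deriv (fun s => f x s) t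

/-- Partial derivative in space of a function `f : ℝ → ℝ → ℝ` (space, then time). -/
noncomputable def px (f : ℝ → ℝ → ℝ) (x t : ℝ) : ℝ := deriv (fun y => f y t) x

/-- Second partial derivative in time. -/
noncomputable def ptt (f : ℝ → ℝ → ℝ) (x t : ℝ) : ℝ :=
  deriv (fun s => deriv (fun s' => f x s') s) t

/-- Second partial derivative in space. -/
noncomputable def pxx (f : ℝ → ℝ → ℝ) (x t : ℝ) : ℝ :=
  deriv (fun y => deriv (fun y' => f y' t) y) x

open Set

lemma abs_sub_le_of_abs_deriv_le {f : ℝ → ℝ} {M : ℝ} (hf : Differentiable ℝ f)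
    (hM : ∀ s, |deriv f s| ≤ M) (a b : ℝ) : |f b - f a| ≤ M * |b - a| :=
  convex_univ.norm_image_sub_le_of_norm_deriv_le (fun s _ => hf s) (fun s _ => hM s)
    (mem_univ a) (mem_univ b)

lemma abs_sub_sub_deriv_mul_le {f : ℝ → ℝ} {M h : ℝ} (hf : Differentiable ℝ f)
    (hf' : Differentiable ℝ (deriv f)) (hM : ∀ s, |deriv (deriv f) s| ≤ M) (hh : 0 ≤ h)
    (t : ℝ) : |f (t + h) - f t - deriv f t * h| ≤ M * h ^ 2 / 2 := by
  have hremainder : ∀ s, HasDerivAt (fun s => f s - f t - deriv f t * (s - t))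
      (deriv f s - deriv f t) s := fun s =>
    (((hf s).hasDerivAt.sub_const (f t)).sub
      (((hasDerivAt_id s).sub_const t).const_mul (deriv f t))).congr_deriv (by ring)
  have hparabola : ∀ s, HasDerivAt (fun s => M * (s - t) ^ 2 / 2) (M * (s - t)) s := fun s =>
    ((((hasDerivAt_id s).sub_const t).pow 2).const_mul M).div_const 2
      |>.congr_deriv (by simp only [id]; ring)
  have hbound : ∀ s ∈ Ico t (t + h), ‖deriv f s - deriv f t‖ ≤ M * (s - t) := fun s hs => by
    simpa only [Real.norm_eq_abs, abs_of_nonneg (sub_nonneg.2 hs.1)] using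
      abs_sub_le_of_abs_deriv_le hf' hM t s
  simpa using image_norm_le_of_norm_deriv_right_le_deriv_boundary
    (fun s _ => (hremainder s).continuousAt.continuousWithinAt)
    (fun s _ => (hremainder s).hasDerivWithinAt) (by simp) hparabola hbound
    (right_mem_Icc.2 (le_add_of_nonneg_right hh))

lemma abs_implicit_diffusion_residual_le {f g : ℝ → ℝ} {M b C h t : ℝ} (hf : ContDiff ℝ 2 f)
    (hf'' : ∀ s, |deriv (deriv f) s| ≤ M) (hg : Differentiable ℝ g)
    (hg' : ∀ s, |deriv g s| ≤ M) (hb : |b| ≤ 1) (hh : 0 < h)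
    (heq : deriv f t + C = b * g t) :
    |(f (t + h) - f t) / h + C - b * g (t + h)| ≤ 3 / 2 * M * h := by
  have htaylor := abs_sub_sub_deriv_mul_le (hf.differentiable two_ne_zero)
    hf.differentiable_deriv_two hf'' hh.le t
  have hmvt := abs_sub_le_of_abs_deriv_le hg hg' (t + h) t
  rw [show t - (t + h) = -h by ring, abs_neg, abs_of_pos hh] at hmvt
  have hsplit : (f (t + h) - f t) / h + C - b * g (t + h)
      = (f (t + h) - f t - deriv f t * h) / h + b * (g t - g (t + h)) := by
    field_simp
    linear_combination h * heq
  calc |(f (t + h) - f t) / h + C - b * g (t + h)|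
      ≤ |f (t + h) - f t - deriv f t * h| / h + |b| * |g t - g (t + h)| := by
        rw [hsplit, ← abs_mul, ← abs_of_pos hh, ← abs_div, abs_of_pos hh]
        exact abs_add_le _ _
    _ ≤ M * h ^ 2 / 2 / h + 1 * (M * h) := by gcongr
    _ = 3 / 2 * M * h := by field_simp; ring

theorem stmt10_general (ε Δt M : ℝ) (hΔt : 0 < Δt)
    (ρ j : ℝ → ℝ → ℝ)
    (heq1 : ∀ x t, pt ρ x t + (ε ^ 2 / (ε ^ 2 + Δt)) * px j x t
      = (Δt / (ε ^ 2 + Δt)) * pxx ρ x t)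
    (heq2 : ∀ x t, pt j x t + (1 / (ε ^ 2 + Δt)) * px ρ x t
      = -(1 / (ε ^ 2 + Δt)) * j x t + (Δt / (ε ^ 2 + Δt)) * pxx j x t)
    (hρt : ∀ x, ContDiff ℝ 2 (fun t => ρ x t))
    (hjt : ∀ x, ContDiff ℝ 2 (fun t => j x t))
    (hρtt : ∀ x t, |ptt ρ x t| ≤ M)
    (hjtt : ∀ x t, |ptt j x t| ≤ M)
    (hρxxt : ∀ x, ContDiff ℝ 1 (fun t => pxx ρ x t))
    (hjxxt : ∀ x, ContDiff ℝ 1 (fun t => pxx j x t))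
    (hρxxt' : ∀ x t, |deriv (fun s => pxx ρ x s) t| ≤ M)
    (hjxxt' : ∀ x t, |deriv (fun s => pxx j x s) t| ≤ M) :
    ∀ x t,
      |(ρ x (t + Δt) - ρ x t) / Δt + (ε ^ 2 / (ε ^ 2 + Δt)) * px j x t
        - (Δt / (ε ^ 2 + Δt)) * pxx ρ x (t + Δt)| ≤ (3 / 2) * M * Δt ∧
      |(j x (t + Δt) - j x t) / Δt + (1 / (ε ^ 2 + Δt)) * px ρ x t
        + (1 / (ε ^ 2 + Δt)) * j x t
        - (Δt / (ε ^ 2 + Δt)) * pxx j x (t + Δt)| ≤ (3 / 2) * M * Δt := by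
  intro x t
  have hb : |Δt / (ε ^ 2 + Δt)| ≤ 1 := by
    rw [abs_of_nonneg (by positivity), div_le_one (by positivity)]
    linarith [sq_nonneg ε]
  refine ⟨abs_implicit_diffusion_residual_le (hρt x) (hρtt x)
    ((hρxxt x).differentiable one_ne_zero) (hρxxt' x) hb hΔt (heq1 x t), ?_⟩
  have hj := abs_implicit_diffusion_residual_le
    (C := 1 / (ε ^ 2 + Δt) * px ρ x t + 1 / (ε ^ 2 + Δt) * j x t) (hjt x) (hjtt x)
    ((hjxxt x).differentiable one_ne_zero) (hjxxt' x) hb hΔt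
    (by unfold pt at heq2; linear_combination heq2 x t)
  rwa [← add_assoc] at hj

/-- Exact solutions of the modified macroscopic Goldstein–Taylor
system satisfy the implicit-in-diffusion time-discrete scheme up to first order
in `Δt`, with residuals bounded by `(3/2) M Δt`. -/
theorem stmt10 (ε Δt M : ℝ) (hε : 0 < ε) (hΔt : 0 < Δt) (hΔt1 : Δt ≤ 1)
    (ρ j : ℝ → ℝ → ℝ)
    (heq1 : ∀ x t, pt ρ x t + (ε ^ 2 / (ε ^ 2 + Δt)) * px j x t
      = (Δt / (ε ^ 2 + Δt)) * pxx ρ x t)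
    (heq2 : ∀ x t, pt j x t + (1 / (ε ^ 2 + Δt)) * px ρ x t
      = -(1 / (ε ^ 2 + Δt)) * j x t + (Δt / (ε ^ 2 + Δt)) * pxx j x t)
    (hρt : ∀ x, ContDiff ℝ 2 (fun t => ρ x t))
    (hjt : ∀ x, ContDiff ℝ 2 (fun t => j x t))
    (hρtt : ∀ x t, |ptt ρ x t| ≤ M)
    (hjtt : ∀ x t, |ptt j x t| ≤ M)
    (hρxxt : ∀ x, ContDiff ℝ 1 (fun t => pxx ρ x t))
    (hjxxt : ∀ x, ContDiff ℝ 1 (fun t => pxx j x t))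
    (hρxxt' : ∀ x t, |deriv (fun s => pxx ρ x s) t| ≤ M)
    (hjxxt' : ∀ x t, |deriv (fun s => pxx j x s) t| ≤ M) :
    ∀ x t,
      |(ρ x (t + Δt) - ρ x t) / Δt + (ε ^ 2 / (ε ^ 2 + Δt)) * px j x t
        - (Δt / (ε ^ 2 + Δt)) * pxx ρ x (t + Δt)| ≤ (3 / 2) * M * Δt ∧
      |(j x (t + Δt) - j x t) / Δt + (1 / (ε ^ 2 + Δt)) * px ρ x t
        + (1 / (ε ^ 2 + Δt)) * j x t
        - (Δt / (ε ^ 2 + Δt)) * pxx j x (t + Δt)| ≤ (3 / 2) * M * Δt :=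
  stmt10_general ε Δt M hΔt ρ j heq1 heq2 hρt hjt hρtt hjtt hρxxt hjxxt hρxxt' hjxxt'
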